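/- arXiv:2103.04589 — 5 statements merged into one kernel-verified Lean document; each statement's English description precedes it below -/
import Mathlib

section
/- Let q > 1 be a real number and α a nonzero complex number such that α ≠ ±q^{1/2}, α² ≠ q and α^{-2} ≠ q. Set λ = q^{1/2}(α + α^{-1}) and define, for ε ∈ {1, -1}, κ_ε = (2(1+q^{-1}))^{-1} · (1 - α²q^{-1})(1 - q^{-1})(1 - α^{-2}q^{-1}) / ((1 - ε α q^{-1/2})(1 - ε α^{-1} q^{-1/2})), and κ_ram = (2(1+q^{-1}))^{-1} · (1 - α²q^{-1})(1 - q^{-1})(1 - α^{-2}q^{-1}). Then κ_{+1} + κ_{-1} + 2·κ_ram/q = 1 - q^{-3} - ((q-1)/(q+1))·q^{-3}·λ². -/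
/-!
Write `x = α q^{-1/2}` and `y = α⁻¹ q^{-1/2}`, so that `x y = q⁻¹`. The two unramified
denominators `(1 - x)(1 - y)` and `(1 + x)(1 + y)` multiply to `(1 - α² q⁻¹)(1 - α⁻² q⁻¹)`, which
together with `1 - q⁻¹` is the numerator `L(1, π, Ad)⁻¹`; hence each unramified term is a
polynomial, and their sum collapses because `(1 - x)(1 - y) + (1 + x)(1 + y) = 2(1 + q⁻¹)`.
The ramified term is rewritten with `λ² = q (α + α⁻¹)²`.
-/

namespace LocalKappa

variable {K : Type*} [Field K]

/-- `L(1, π, Ad)⁻¹` in terms of the Satake parameter `α`. -/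
def invAdjointL (q α : K) : K :=
  (1 - α ^ 2 * q⁻¹) * (1 - q⁻¹) * (1 - α⁻¹ ^ 2 * q⁻¹)

/-- `L(1/2, π ⊗ η_ε)⁻¹` for the unramified quadratic character of sign `ε`, where `s = q^{1/2}`. -/
def invTwistedL (s α ε : K) : K :=
  (1 - ε * α * s⁻¹) * (1 - ε * α⁻¹ * s⁻¹)

def kappaUnram (q s α ε : K) : K :=
  (2 * (1 + q⁻¹))⁻¹ * invAdjointL q α / invTwistedL s α ε

def kappaRam (q α : K) : K :=
  (2 * (1 + q⁻¹))⁻¹ * invAdjointL q α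

section

variable {q s α : K}

theorem invTwistedL_one_mul_neg_one (hs : s ^ 2 = q) :
    invTwistedL s α 1 * invTwistedL s α (-1) = (1 - α ^ 2 * q⁻¹) * (1 - α⁻¹ ^ 2 * q⁻¹) := by
  subst hs
  unfold invTwistedL
  ring

theorem invAdjointL_eq_mul_invTwistedL (hs : s ^ 2 = q) :
    invAdjointL q α = (1 - q⁻¹) * (invTwistedL s α 1 * invTwistedL s α (-1)) := by
  rw [invTwistedL_one_mul_neg_one hs, invAdjointL]
  ring

theorem invTwistedL_one_add_neg_one (hs : s ^ 2 = q) (hα : α ≠ 0) :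
    invTwistedL s α 1 + invTwistedL s α (-1) = 2 * (1 + q⁻¹) := by
  subst hs
  unfold invTwistedL
  linear_combination 2 * s⁻¹ ^ 2 * mul_inv_cancel₀ hα

theorem one_sub_mul_inv_ne_zero {a : K} (hq : q ≠ 0) (ha : a ≠ q) : 1 - a * q⁻¹ ≠ 0 := by
  rwa [← div_eq_mul_inv, sub_ne_zero, ne_comm, ne_eq, div_eq_one_iff_eq hq]

theorem kappaUnram_one_add_neg_one (h2 : (2 : K) ≠ 0) (hs : s ^ 2 = q) (hq : q ≠ 0)
    (hq' : q + 1 ≠ 0) (hα : α ≠ 0) (hα₁ : α ^ 2 ≠ q) (hα₂ : α⁻¹ ^ 2 ≠ q) :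
    kappaUnram q s α 1 + kappaUnram q s α (-1) = 1 - q⁻¹ := by
  have hprod : invTwistedL s α 1 * invTwistedL s α (-1) ≠ 0 := by
    rw [invTwistedL_one_mul_neg_one hs]
    exact mul_ne_zero (one_sub_mul_inv_ne_zero hq hα₁) (one_sub_mul_inv_ne_zero hq hα₂)
  have hq_inv : 1 + q⁻¹ ≠ 0 := by
    rw [show 1 + q⁻¹ = (q + 1) / q by field_simp]
    exact div_ne_zero hq' hq
  calc kappaUnram q s α 1 + kappaUnram q s α (-1)
      = (2 * (1 + q⁻¹))⁻¹ * (1 - q⁻¹) * (invTwistedL s α 1 + invTwistedL s α (-1)) := by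
        simp only [kappaUnram, invAdjointL_eq_mul_invTwistedL hs]
        field_simp [left_ne_zero_of_mul hprod, right_ne_zero_of_mul hprod]
        ring
    _ = 1 - q⁻¹ := by
        rw [invTwistedL_one_add_neg_one hs hα]
        field_simp

theorem one_sub_sq_mul_inv_mul_one_sub_inv_sq_mul_inv (hs : s ^ 2 = q) (hq : q ≠ 0) (hα : α ≠ 0) :
    (1 - α ^ 2 * q⁻¹) * (1 - α⁻¹ ^ 2 * q⁻¹) = (1 + q⁻¹) ^ 2 - (s * (α + α⁻¹)) ^ 2 * q⁻¹ ^ 2 := by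
  subst hs
  field_simp
  ring

theorem two_mul_kappaRam_div (h2 : (2 : K) ≠ 0) (hs : s ^ 2 = q) (hq : q ≠ 0) (hq' : q + 1 ≠ 0)
    (hα : α ≠ 0) :
    2 * kappaRam q α / q =
      (1 - q⁻¹ ^ 2) * q⁻¹ - ((q - 1) / (q + 1)) * q⁻¹ ^ 3 * (s * (α + α⁻¹)) ^ 2 := by
  have h : invAdjointL q α = (1 - q⁻¹) * ((1 + q⁻¹) ^ 2 - (s * (α + α⁻¹)) ^ 2 * q⁻¹ ^ 2) := by
    rw [← one_sub_sq_mul_inv_mul_one_sub_inv_sq_mul_inv hs hq hα, invAdjointL]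
    ring
  rw [kappaRam, h]
  field_simp
  ring

theorem kappa_sum_eq (h2 : (2 : K) ≠ 0) (hs : s ^ 2 = q) (hq : q ≠ 0) (hq' : q + 1 ≠ 0)
    (hα : α ≠ 0) (hα₁ : α ^ 2 ≠ q) (hα₂ : α⁻¹ ^ 2 ≠ q) :
    kappaUnram q s α 1 + kappaUnram q s α (-1) + 2 * kappaRam q α / q =
      1 - q⁻¹ ^ 3 - ((q - 1) / (q + 1)) * q⁻¹ ^ 3 * (s * (α + α⁻¹)) ^ 2 := by
  rw [kappaUnram_one_add_neg_one h2 hs hq hq' hα hα₁ hα₂, two_mul_kappaRam_div h2 hs hq hq' hα]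
  ring

end

end LocalKappa

theorem stmt2_general (q : ℝ) (hq : 1 < q) (α : ℂ) (hα0 : α ≠ 0)
    (h3 : α ^ 2 ≠ (q : ℂ)) (h4 : (α⁻¹) ^ 2 ≠ (q : ℂ)) :
    let lam : ℂ := (Real.sqrt q : ℂ) * (α + α⁻¹)
    let κ : ℂ → ℂ := fun ε =>
      (2 * (1 + (q : ℂ)⁻¹))⁻¹ *
        ((1 - α ^ 2 * (q : ℂ)⁻¹) * (1 - (q : ℂ)⁻¹) * (1 - (α⁻¹) ^ 2 * (q : ℂ)⁻¹)) /
        ((1 - ε * α * ((Real.sqrt q : ℂ))⁻¹) * (1 - ε * α⁻¹ * ((Real.sqrt q : ℂ))⁻¹))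
    let κram : ℂ :=
      (2 * (1 + (q : ℂ)⁻¹))⁻¹ *
        ((1 - α ^ 2 * (q : ℂ)⁻¹) * (1 - (q : ℂ)⁻¹) * (1 - (α⁻¹) ^ 2 * (q : ℂ)⁻¹))
    κ 1 + κ (-1) + 2 * κram / (q : ℂ) =
      1 - (q : ℂ)⁻¹ ^ 3 - (((q : ℂ) - 1) / ((q : ℂ) + 1)) * (q : ℂ)⁻¹ ^ 3 * lam ^ 2 := by
  intro lam κ κram
  have hs : ((Real.sqrt q : ℂ)) ^ 2 = q := by
    rw [← Complex.ofReal_pow, Real.sq_sqrt (by linarith)]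
  have hq0 : (q : ℂ) ≠ 0 := Complex.ofReal_ne_zero.mpr (by linarith)
  have hq1 : (q : ℂ) + 1 ≠ 0 := by exact_mod_cast (by linarith : q + 1 ≠ 0)
  exact LocalKappa.kappa_sum_eq two_ne_zero hs hq0 hq1 hα0 h3 h4

theorem stmt2 (q : ℝ) (hq : 1 < q) (α : ℂ) (hα0 : α ≠ 0)
    (h1 : α ≠ (Real.sqrt q : ℂ)) (h2 : α ≠ -(Real.sqrt q : ℂ))
    (h3 : α ^ 2 ≠ (q : ℂ)) (h4 : (α⁻¹) ^ 2 ≠ (q : ℂ)) :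
    let lam : ℂ := (Real.sqrt q : ℂ) * (α + α⁻¹)
    let κ : ℂ → ℂ := fun ε =>
      (2 * (1 + (q : ℂ)⁻¹))⁻¹ *
        ((1 - α ^ 2 * (q : ℂ)⁻¹) * (1 - (q : ℂ)⁻¹) * (1 - (α⁻¹) ^ 2 * (q : ℂ)⁻¹)) /
        ((1 - ε * α * ((Real.sqrt q : ℂ))⁻¹) * (1 - ε * α⁻¹ * ((Real.sqrt q : ℂ))⁻¹))
    let κram : ℂ :=
      (2 * (1 + (q : ℂ)⁻¹))⁻¹ *
        ((1 - α ^ 2 * (q : ℂ)⁻¹) * (1 - (q : ℂ)⁻¹) * (1 - (α⁻¹) ^ 2 * (q : ℂ)⁻¹))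
    κ 1 + κ (-1) + 2 * κram / (q : ℂ) =
      1 - (q : ℂ)⁻¹ ^ 3 - (((q : ℂ) - 1) / ((q : ℂ) + 1)) * (q : ℂ)⁻¹ ^ 3 * lam ^ 2 :=
  stmt2_general q hq α hα0 h3 h4
end

section
/- (Landau's theorem) Let Σ_{n=1}^∞ a_n n^{-s} be a Dirichlet series with nonnegative real coefficients a_n ≥ 0, and let σ ∈ ℝ be its abscissa of convergence (assumed finite). Then the sum function cannot be extended to a function holomorphic in any neighborhood of the real point s = σ; i.e., s = σ is a singularity of the Dirichlet series. -/
/-!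
Let `f` be holomorphic on the disc of radius `r` around a real point `x₀` to the right of the
abscissa, and equal to the L-series near `x₀`. Its Taylor series at `x₀` converges on the whole
disc, and its `m`-th coefficient is `(-1)^m / m!` times the L-series of `log^m · a` at `x₀`.
At a real point `x < x₀` of the disc this makes the Taylor series the double series
`∑_m ∑_n (x₀ - x)^m / m! · log n ^ m · a n / n ^ x₀`, whose terms are nonnegative when `a` is;
summing over `m` first instead gives `∑_n a n / n ^ x`, so the L-series converges absolutely at
`x`. Choosing `x₀` just right of the abscissa, so that the disc reaches past it, a point `x` below
the abscissa gives the contradiction.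
-/

open Complex LSeries Filter Nat Topology

namespace LSeries

lemma norm_term_logMul (f : ℕ → ℂ) (s : ℂ) (n : ℕ) :
    ‖term (logMul f) s n‖ = Real.log n * ‖term f s n‖ := by
  rcases eq_or_ne n 0 with rfl | hn
  · simp
  · rw [term_of_ne_zero hn, term_of_ne_zero hn, logMul, mul_div_assoc, norm_mul,
      ← natCast_log, norm_real, Real.norm_of_nonneg (Real.log_natCast_nonneg n)]

lemma norm_term_logMul_iterate (f : ℕ → ℂ) (s : ℂ) (m n : ℕ) :
    ‖term (logMul^[m] f) s n‖ = Real.log n ^ m * ‖term f s n‖ := by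
  induction m with
  | zero => simp
  | succ m ih =>
    rw [Function.iterate_succ_apply', norm_term_logMul, ih]
    ring

lemma norm_term_eq_rpow_mul_norm_term (f : ℕ → ℂ) (x x₀ : ℝ) (n : ℕ) :
    ‖term f x n‖ = (n : ℝ) ^ (x₀ - x) * ‖term f x₀ n‖ := by
  rcases eq_or_ne n 0 with rfl | hn
  · simp
  · have hn₀ : (0 : ℝ) < n := by positivity
    simp only [norm_term_eq, if_neg hn, ofReal_re, Real.rpow_sub hn₀]
    field_simp

/-- The exponential series of `(x₀ - x) * log n`, which sums to `n ^ (x₀ - x)`. -/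
lemma hasSum_norm_term_logMul_iterate (f : ℕ → ℂ) (x x₀ : ℝ) (n : ℕ) :
    HasSum (fun m => (x₀ - x) ^ m / m ! * ‖term (logMul^[m] f) x₀ n‖) ‖term f x n‖ := by
  have hexp : Real.exp ((x₀ - x) * Real.log n) * ‖term f x₀ n‖ = ‖term f x n‖ := by
    rcases eq_or_ne n 0 with rfl | hn
    · simp
    · rw [norm_term_eq_rpow_mul_norm_term f x x₀, Real.rpow_def_of_pos (by positivity),
        mul_comm (Real.log n)]
  have hseries := (NormedSpace.expSeries_div_hasSum_exp ((x₀ - x) * Real.log n)).mul_right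
    ‖term f x₀ n‖
  rw [← Real.exp_eq_exp_ℝ, hexp] at hseries
  refine hseries.congr_fun fun m => ?_
  rw [norm_term_logMul_iterate, mul_pow]
  ring

lemma logMul_iterate_ofReal (a : ℕ → ℝ) (m : ℕ) :
    logMul^[m] (fun n => (a n : ℂ)) = fun n : ℕ => ((Real.log n ^ m * a n : ℝ) : ℂ) := by
  induction m with
  | zero => simp
  | succ m ih =>
    rw [Function.iterate_succ_apply', ih]
    ext n
    simp only [logMul, ← natCast_log]
    push_cast
    ring

end LSeries

/-- Tonelli for the double series `∑_m ∑_n (x₀ - x)^m / m! · ‖term (log^m · f) x₀ n‖`. -/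
theorem LSeriesSummable_of_summable_taylor {f : ℕ → ℂ} {x x₀ : ℝ} (hx : x ≤ x₀)
    (hx₀ : abscissaOfAbsConv f < x₀)
    (h : Summable fun m => (x₀ - x) ^ m / m ! * ∑' n, ‖term (logMul^[m] f) x₀ n‖) :
    LSeriesSummable f x := by
  set F : ℕ × ℕ → ℝ := fun p => (x₀ - x) ^ p.1 / p.1 ! * ‖term (logMul^[p.1] f) x₀ p.2‖
  have hF : 0 ≤ F := fun p =>
    mul_nonneg (div_nonneg (pow_nonneg (sub_nonneg.2 hx) _) (by positivity)) (norm_nonneg _)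
  have hrows : ∀ m, Summable fun n => F (m, n) := fun m =>
    (LSeriesSummable_of_abscissaOfAbsConv_lt_re (f := logMul^[m] f) (s := x₀)
      (by simpa using hx₀)).norm.mul_left ((x₀ - x) ^ m / m !)
  have hFsum : Summable F :=
    (summable_prod_of_nonneg hF).2 ⟨hrows, by simpa only [F, tsum_mul_left] using h⟩
  exact Summable.of_norm <| hFsum.prod_symm.prod.congr fun n =>
    (hasSum_norm_term_logMul_iterate f x x₀ n).tsum_eq

lemma LSeries_ofReal_eq_tsum_norm_term {a : ℕ → ℝ} (ha : ∀ n, 0 ≤ a n) (x : ℝ) :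
    LSeries (fun n => (a n : ℂ)) x = ((∑' n, ‖term (fun n => (a n : ℂ)) x n‖ : ℝ) : ℂ) := by
  rw [LSeries, ofReal_tsum]
  congr 1
  ext n
  rcases eq_or_ne n 0 with rfl | hn
  · simp
  · have hterm : term (fun n => (a n : ℂ)) x n = ((a n / (n : ℝ) ^ x : ℝ) : ℂ) := by
      rw [term_of_ne_zero hn, ofReal_div, ofReal_cpow (Nat.cast_nonneg n), ofReal_natCast]
    rw [hterm, norm_real, Real.norm_of_nonneg (by have := ha n; positivity)]

theorem LSeriesSummable_of_differentiableOn_ball {a : ℕ → ℝ} (ha : ∀ n, 0 ≤ a n) {f : ℂ → ℂ}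
    {x₀ r x : ℝ} (hx₀ : abscissaOfAbsConv (fun n => (a n : ℂ)) < x₀)
    (hf : DifferentiableOn ℂ f (Metric.ball (x₀ : ℂ) r))
    (hfL : f =ᶠ[𝓝 (x₀ : ℂ)] LSeries (fun n => (a n : ℂ))) (hx : x₀ - r < x) (hxx₀ : x ≤ x₀) :
    LSeriesSummable (fun n => (a n : ℂ)) x := by
  have hxball : (x : ℂ) ∈ Metric.ball (x₀ : ℂ) r := by
    rw [Metric.mem_ball, Complex.dist_eq, ← ofReal_sub, norm_real, Real.norm_eq_abs,
      abs_of_nonpos (by linarith)]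
    linarith
  refine LSeriesSummable_of_summable_taylor hxx₀ hx₀ (summable_ofReal.mp ?_)
  refine (hasSum_taylorSeries_on_ball hf hxball).summable.congr fun m => ?_
  have hcoeff : ∀ n : ℕ, 0 ≤ Real.log n ^ m * a n := fun n =>
    mul_nonneg (pow_nonneg (Real.log_natCast_nonneg n) m) (ha n)
  rw [(hfL.iteratedDeriv m).eq_of_nhds, LSeries_iteratedDeriv m (by simpa using hx₀),
    logMul_iterate_ofReal, LSeries_ofReal_eq_tsum_norm_term hcoeff, ← logMul_iterate_ofReal,
    smul_eq_mul, smul_eq_mul, ← mul_assoc (((x : ℂ) - x₀) ^ m), ← mul_pow]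
  push_cast
  ring

theorem stmt10 (a : ℕ → ℝ) (ha : ∀ n, 0 ≤ a n) (σ : ℝ)
    (hσ : LSeries.abscissaOfAbsConv (fun n => (a n : ℂ)) = (σ : EReal)) :
    ¬ ∃ (U : Set ℂ) (f : ℂ → ℂ), IsOpen U ∧ (σ : ℂ) ∈ U ∧ DifferentiableOn ℂ f U ∧
      ∀ s ∈ U, σ < s.re → f s = LSeries (fun n => (a n : ℂ)) s := by
  rintro ⟨U, f, hU, hσU, hf, hfeq⟩
  obtain ⟨ε, hε, hεU⟩ := Metric.isOpen_iff.mp hU _ hσU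
  set x₀ : ℝ := σ + ε / 3 with hx₀_def
  have hx₀ : abscissaOfAbsConv (fun n => (a n : ℂ)) < x₀ := by
    rw [hσ, EReal.coe_lt_coe_iff]
    linarith
  have hball : Metric.ball (x₀ : ℂ) (2 * ε / 3) ⊆ U := by
    refine (Metric.ball_subset_ball' ?_).trans hεU
    rw [Complex.dist_eq, ← ofReal_sub, norm_real, Real.norm_eq_abs, abs_of_pos (by linarith)]
    linarith
  have hfL : f =ᶠ[𝓝 (x₀ : ℂ)] LSeries (fun n => (a n : ℂ)) := by
    filter_upwards [hU.mem_nhds (hball (Metric.mem_ball_self (by linarith))),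
      (isOpen_lt continuous_const continuous_re).mem_nhds
        (show σ < (x₀ : ℂ).re by rw [ofReal_re]; linarith)]
      with s hsU hsσ using hfeq s hsU hsσ
  have hsummable := LSeriesSummable_of_differentiableOn_ball ha hx₀ (hf.mono hball) hfL
    (x := σ - ε / 6) (by linarith) (by linarith)
  have hle := hsummable.abscissaOfAbsConv_le
  rw [hσ, ofReal_re, EReal.coe_le_coe_iff] at hle
  linarith
end

section
/- Let F be a field of characteristic zero. For x ∈ M₂(F), write x^ι = tr(x)·I₂ - x (so that x·x^ι = det(x)·I₂), and for a pair (x, y) ∈ M₂(F) ⊕ M₂(F) set P(x, y) = -det(x·y^ι - y·x^ι). Then for all g₁, g₂ ∈ GL₂(F) and g₃ = (a b; c d) ∈ GL₂(F), one has P(a·g₁^{-1}xg₂ + c·g₁^{-1}yg₂, b·g₁^{-1}xg₂ + d·g₁^{-1}yg₂) = det(g₁)^{-2}·det(g₂)²·det(g₃)²·P(x, y). -/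
/-!
On `M₂(F)` the involution `x ↦ x^ι` is the adjugate: it is linear, reverses products and
satisfies `h h^ι = det h`. So `B(x, y) = x y^ι - y x^ι` is alternating bilinear, hence scaled by
`det g₃` under the mixing `g₃`, and `B(g x h, g y h) = det h • g B(x, y) g^ι`. Taking the
determinant of a `2 × 2` matrix squares the scalars, and `det g^ι = det g`.
-/

/-- The main involution on `M₂(F)`: `x^ι = tr(x)·I₂ - x`. -/
def quatInvol {F : Type} [Field F] (x : Matrix (Fin 2) (Fin 2) F) :
    Matrix (Fin 2) (Fin 2) F :=
  Matrix.trace x • (1 : Matrix (Fin 2) (Fin 2) F) - x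

/-- The fundamental relative invariant `P(x,y) = -det(x y^ι - y x^ι)`. -/
def relInvP {F : Type} [Field F] (x y : Matrix (Fin 2) (Fin 2) F) : F :=
  -Matrix.det (x * quatInvol y - y * quatInvol x)

open Matrix

section

variable {F : Type} [Field F]

theorem quatInvol_eq_adjugate (x : Matrix (Fin 2) (Fin 2) F) : quatInvol x = x.adjugate := by
  ext i j
  fin_cases i <;> fin_cases j <;> simp [quatInvol, adjugate_fin_two, trace_fin_two]

theorem quatInvol_linear_comb (a c : F) (x y : Matrix (Fin 2) (Fin 2) F) :
    quatInvol (a • x + c • y) = a • quatInvol x + c • quatInvol y := by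
  simp only [quatInvol, trace_add, trace_smul, smul_eq_mul]
  module

theorem relInvP_eq_neg_det_adjugate (x y : Matrix (Fin 2) (Fin 2) F) :
    relInvP x y = -det (x * y.adjugate - y * x.adjugate) := by
  rw [relInvP, quatInvol_eq_adjugate, quatInvol_eq_adjugate]

theorem relInvP_mix (x y : Matrix (Fin 2) (Fin 2) F) (a b c d : F) :
    relInvP (a • x + c • y) (b • x + d • y) = (a * d - b * c) ^ 2 * relInvP x y := by
  have hmix : (a • x + c • y) * quatInvol (b • x + d • y)
        - (b • x + d • y) * quatInvol (a • x + c • y) =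
      (a * d - b * c) • (x * quatInvol y - y * quatInvol x) := by
    simp only [quatInvol_linear_comb, mul_add, add_mul, mul_smul_comm, smul_mul_assoc]
    module
  rw [relInvP, relInvP, hmix, det_smul, Fintype.card_fin, mul_neg]

theorem relInvP_mul_mul (x y g h : Matrix (Fin 2) (Fin 2) F) :
    relInvP (g * x * h) (g * y * h) = g.det ^ 2 * h.det ^ 2 * relInvP x y := by
  have hconj : ∀ u v : Matrix (Fin 2) (Fin 2) F,
      g * u * h * (g * v * h).adjugate = h.det • (g * (u * v.adjugate) * g.adjugate) := by
    intro u v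
    simp only [adjugate_mul_distrib, mul_assoc]
    rw [← mul_assoc h, mul_adjugate, smul_mul_assoc, one_mul, mul_smul_comm, mul_smul_comm]
  rw [relInvP_eq_neg_det_adjugate, relInvP_eq_neg_det_adjugate, hconj, hconj, ← smul_sub,
    ← sub_mul, ← mul_sub, det_smul, det_mul, det_mul, det_adjugate, Fintype.card_fin]
  ring

end

theorem stmt12_general (F : Type) [Field F]
    (x y : Matrix (Fin 2) (Fin 2) F)
    (g₁ g₂ : Matrix (Fin 2) (Fin 2) F)
    (a b c d : F) :
    relInvP (a • (g₁⁻¹ * x * g₂) + c • (g₁⁻¹ * y * g₂))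
        (b • (g₁⁻¹ * x * g₂) + d • (g₁⁻¹ * y * g₂)) =
      g₁.det⁻¹ ^ 2 * g₂.det ^ 2 * (a * d - b * c) ^ 2 * relInvP x y := by
  rw [relInvP_mix, relInvP_mul_mul, det_nonsing_inv, Ring.inverse_eq_inv]
  ring

theorem stmt12 (F : Type) [Field F] [CharZero F]
    (x y : Matrix (Fin 2) (Fin 2) F)
    (g₁ g₂ : Matrix (Fin 2) (Fin 2) F) (hg₁ : IsUnit g₁.det) (hg₂ : IsUnit g₂.det)
    (a b c d : F) (hg₃ : a * d - b * c ≠ 0) :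
    relInvP (a • (g₁⁻¹ * x * g₂) + c • (g₁⁻¹ * y * g₂))
        (b • (g₁⁻¹ * x * g₂) + d • (g₁⁻¹ * y * g₂)) =
      g₁.det⁻¹ ^ 2 * g₂.det ^ 2 * (a * d - b * c) ^ 2 * relInvP x y :=
  stmt12_general F x y g₁ g₂ a b c d
end

section
/- Let t > 0, C ≥ 0, C' ∈ ℝ, and let A : (0, ∞) → [0, ∞) and S : (0, ∞) → ℝ be functions. Assume (i) limsup_{x→∞} x^{-t} A(x) ≤ C, (ii) lim_{x→∞} x^{-t} S(x) = C', (iii) there are nonnegative reals b_n (n ≥ 2) with β := Σ_{n≥2} b_n n^{-t} < ∞ and S(x) - A(x) ≤ Σ_{n=2}^∞ b_n A(x/n) for all x > 0, and (iv) there is K ≥ 0 with A(x) ≤ K·x^t for all x > 0. Then liminf_{x→∞} x^{-t} A(x) ≥ C' - C·β. -/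
open Filter in
theorem stmt15 (t C C' : ℝ) (ht : 0 < t) (hC : 0 ≤ C)
    (A S : ℝ → ℝ) (hA0 : ∀ x, 0 < x → 0 ≤ A x)
    (h1 : limsup (fun x => A x / x ^ t) atTop ≤ C)
    (h2 : Tendsto (fun x => S x / x ^ t) atTop (nhds C'))
    (b : ℕ → ℝ) (hb : ∀ n, 0 ≤ b n) (hb0 : b 0 = 0) (hb1 : b 1 = 0)
    (hsum : Summable fun n => b n * (n : ℝ) ^ (-t))
    (h3 : ∀ x, 0 < x → S x - A x ≤ ∑' n, b n * A (x / n))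
    (K : ℝ) (hK : 0 ≤ K) (h4 : ∀ x, 0 < x → A x ≤ K * x ^ t) :
    C' - C * (∑' n, b n * (n : ℝ) ^ (-t)) ≤ liminf (fun x => A x / x ^ t) atTop := by
  set f0 : ℕ → ℝ := fun n => b n * (n : ℝ) ^ (-t) with hf0
  set β : ℝ := ∑' n, f0 n with hβdef
  have hf0nn : ∀ n, 0 ≤ f0 n := fun n =>
    mul_nonneg (hb n) (Real.rpow_nonneg (Nat.cast_nonneg n) _)
  have hβ0 : 0 ≤ β := tsum_nonneg hf0nn
  -- pointwise bound
  have key : ∀ x : ℝ, 0 < x → ∀ n : ℕ, b n * A (x / n) ≤ K * x ^ t * f0 n := by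
    intro x hx n
    cases n with
    | zero => simp [hf0, hb0]
    | succ m =>
      set n := m + 1
      have hn0 : (0 : ℝ) < (n : ℝ) := by positivity
      have hxn : 0 < x / (n : ℝ) := div_pos hx hn0
      have hpow : (x / (n : ℝ)) ^ t = x ^ t * (n : ℝ) ^ (-t) := by
        rw [Real.div_rpow hx.le hn0.le, Real.rpow_neg hn0.le, div_eq_mul_inv]
      have h := h4 _ hxn
      calc b n * A (x / n) ≤ b n * (K * (x / (n : ℝ)) ^ t) :=
            mul_le_mul_of_nonneg_left h (hb n)
        _ = K * x ^ t * f0 n := by rw [hpow, hf0]; ring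
  have keynn : ∀ x : ℝ, 0 < x → ∀ n : ℕ, 0 ≤ b n * A (x / n) := by
    intro x hx n
    cases n with
    | zero => simp [hb0]
    | succ m =>
      exact mul_nonneg (hb _) (hA0 _ (div_pos hx (by positivity)))
  have hsumA : ∀ x : ℝ, 0 < x → Summable (fun n => b n * A (x / n)) := by
    intro x hx
    exact Summable.of_nonneg_of_le (keynn x hx) (key x hx) (hsum.mul_left (K * x ^ t))
  -- boundedness of A x / x ^ t
  have hbdd : IsBoundedUnder (· ≤ ·) atTop (fun x => A x / x ^ t) := by
    refine ⟨K, ?_⟩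
    rw [eventually_map]
    filter_upwards [eventually_gt_atTop (0 : ℝ)] with x hx
    have hxt : (0 : ℝ) < x ^ t := Real.rpow_pos_of_pos hx t
    rw [div_le_iff₀ hxt]
    exact h4 x hx
  have hcob : IsCoboundedUnder (· ≥ ·) atTop (fun x => A x / x ^ t) :=
    hbdd.isCoboundedUnder_ge
  -- main eventual bound
  have main : ∀ ε : ℝ, 0 < ε → ∀ᶠ x in atTop, C' - C * β - ε ≤ A x / x ^ t := by
    intro ε hε
    -- choose N with K * tail < ε / 3
    have htail : Tendsto (fun N => K * ∑' k, f0 (k + N)) atTop (nhds 0) := by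
      simpa using (tendsto_sum_nat_add f0).const_mul K
    obtain ⟨N, hN⟩ : ∃ N, K * ∑' k, f0 (k + N) < ε / 3 := by
      have := (htail.eventually (eventually_lt_nhds (show (0:ℝ) < ε / 3 by linarith))).exists
      exact this
    set tail : ℝ := ∑' k, f0 (k + N) with htaildef
    have htail0 : 0 ≤ tail := tsum_nonneg fun k => hf0nn _
    -- choose δ
    set δ : ℝ := ε / (3 * (β + 1)) with hδdef
    have hδ : 0 < δ := by positivity
    have hδβ : δ * β ≤ ε / 3 := by
      rw [hδdef, div_mul_eq_mul_div, div_le_div_iff₀ (by positivity) (by norm_num)]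
      nlinarith
    -- eventual bound from limsup
    have hev : ∀ᶠ y in atTop, A y / y ^ t < C + δ :=
      eventually_lt_of_limsup_lt (lt_of_le_of_lt h1 (by linarith)) hbdd
    -- eventual bound for each n ≥ 1
    have hevn : ∀ n : ℕ, 1 ≤ n → ∀ᶠ x : ℝ in atTop,
        A (x / n) ≤ (C + δ) * x ^ t * (n : ℝ) ^ (-t) := by
      intro n hn
      have hn0 : (0 : ℝ) < (n : ℝ) := by exact_mod_cast hn
      have htend : Tendsto (fun x : ℝ => x / (n : ℝ)) atTop atTop :=
        tendsto_id.atTop_div_const hn0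
      filter_upwards [htend.eventually hev, eventually_gt_atTop (0 : ℝ)] with x hx hx0
      have hxn : 0 < x / (n : ℝ) := div_pos hx0 hn0
      have hxt : (0 : ℝ) < (x / (n : ℝ)) ^ t := Real.rpow_pos_of_pos hxn t
      have hA : A (x / n) ≤ (C + δ) * (x / (n : ℝ)) ^ t := by
        have := (div_lt_iff₀ hxt).1 hx
        linarith
      have hpow : (x / (n : ℝ)) ^ t = x ^ t * (n : ℝ) ^ (-t) := by
        rw [Real.div_rpow hx0.le hn0.le, Real.rpow_neg hn0.le, div_eq_mul_inv]
      calc A (x / n) ≤ (C + δ) * (x / (n : ℝ)) ^ t := hA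
        _ = (C + δ) * x ^ t * (n : ℝ) ^ (-t) := by rw [hpow]; ring
    have hevall : ∀ᶠ x : ℝ in atTop, ∀ n ∈ Finset.range N, 1 ≤ n →
        A (x / n) ≤ (C + δ) * x ^ t * (n : ℝ) ^ (-t) := by
      rw [eventually_all_finset]
      intro n _
      rcases Nat.eq_zero_or_pos n with h0 | h1
      · subst h0; filter_upwards with x h; omega
      · filter_upwards [hevn n h1] with x hx _; exact hx
    -- S x / x ^ t close to C'
    have hevS : ∀ᶠ x : ℝ in atTop, C' - ε / 3 ≤ S x / x ^ t := by
      have := h2.eventually (eventually_gt_nhds (show C' - ε / 3 < C' by linarith))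
      filter_upwards [this] with x hx; linarith
    filter_upwards [hevall, hevS, eventually_gt_atTop (0 : ℝ)] with x hall hS hx
    have hxt : (0 : ℝ) < x ^ t := Real.rpow_pos_of_pos hx t
    have hsA := hsumA x hx
    -- split sum
    have hsplit : (∑' n, b n * A (x / n)) =
        (∑ n ∈ Finset.range N, b n * A (x / n)) + ∑' k, b (k + N) * A (x / (k + N : ℕ)) :=
      (Summable.sum_add_tsum_nat_add N hsA).symm
    -- tail bound
    have hsAtail : Summable (fun k => b (k + N) * A (x / (k + N : ℕ))) :=
      (summable_nat_add_iff N).2 hsA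
    have hsftail : Summable (fun k => K * x ^ t * f0 (k + N)) :=
      (((summable_nat_add_iff N).2 hsum)).mul_left _
    have htailb : (∑' k, b (k + N) * A (x / (k + N : ℕ))) ≤ K * x ^ t * tail := by
      rw [htaildef, ← tsum_mul_left]
      exact Summable.tsum_le_tsum (fun k => key x hx (k + N)) hsAtail hsftail
    -- head bound
    have hheadb : (∑ n ∈ Finset.range N, b n * A (x / n)) ≤
        (C + δ) * x ^ t * ∑ n ∈ Finset.range N, f0 n := by
      rw [Finset.mul_sum]
      refine Finset.sum_le_sum fun n hn => ?_
      rcases Nat.eq_zero_or_pos n with h0 | h1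
      · subst h0; simp [hb0, hf0]
      · have := hall n hn h1
        calc b n * A (x / n) ≤ b n * ((C + δ) * x ^ t * (n : ℝ) ^ (-t)) :=
              mul_le_mul_of_nonneg_left this (hb n)
          _ = (C + δ) * x ^ t * f0 n := by rw [hf0]; ring
    have hheadβ : (∑ n ∈ Finset.range N, f0 n) ≤ β := Summable.sum_le_tsum _ (fun n _ => hf0nn n) hsum
    have hCδ : 0 ≤ C + δ := by linarith
    have hT : (∑' n, b n * A (x / n)) ≤ ((C + δ) * β + ε / 3) * x ^ t := by
      rw [hsplit]
      have h1' : (C + δ) * x ^ t * ∑ n ∈ Finset.range N, f0 n ≤ (C + δ) * β * x ^ t := by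
        have : (C + δ) * x ^ t * (∑ n ∈ Finset.range N, f0 n) ≤ (C + δ) * x ^ t * β :=
          mul_le_mul_of_nonneg_left hheadβ (by positivity)
        linarith [this]
      have h2' : K * x ^ t * tail ≤ ε / 3 * x ^ t := by
        have : K * tail * x ^ t ≤ ε / 3 * x ^ t :=
          mul_le_mul_of_nonneg_right hN.le hxt.le
        nlinarith [this]
      have := add_le_add (le_trans hheadb h1') (le_trans htailb h2')
      linarith [this]
    -- conclude
    have hAx : S x - ((C + δ) * β + ε / 3) * x ^ t ≤ A x := by
      have := h3 x hx
      linarith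
    have : S x / x ^ t - ((C + δ) * β + ε / 3) ≤ A x / x ^ t := by
      have h : (S x - ((C + δ) * β + ε / 3) * x ^ t) / x ^ t ≤ A x / x ^ t := by
        gcongr
      rwa [sub_div, mul_div_cancel_right₀ _ hxt.ne'] at h
    have hexp : (C + δ) * β = C * β + δ * β := by ring
    calc C' - C * β - ε ≤ (C' - ε / 3) - ((C + δ) * β + ε / 3) := by
          rw [hexp]; linarith
      _ ≤ S x / x ^ t - ((C + δ) * β + ε / 3) := by linarith
      _ ≤ A x / x ^ t := this
  -- finish
  refine le_of_forall_pos_le_add fun ε hε => ?_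
  have := le_liminf_of_le hcob (main ε hε)
  linarith
end

section
/- Let h : ℝ → [0, ∞] be a measurable function. Then ∫_{(-π, π)} h(cot θ) / |cos(2θ)| dθ = 2 ∫_ℝ h(z) / |z² - 1| dz (as an equality in [0, ∞], with the integrand on the left interpreted via the substitution z = cot θ). -/
/-!
On `(0, π)` the map `θ ↦ cot θ = tan (π/2 - θ)` is a diffeomorphism onto `ℝ` with
`|d cot θ / dθ| = 1 / sin² θ`, and `cos 2θ = sin² θ (cot² θ - 1)`; so the substitution `z = cot θ`
turns `dθ / |cos 2θ|` into `dz / |z² - 1|`. The integrand on the left is `π`-periodic, so the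
integral over `(-π, π)` is twice the one over `(0, π)`.
-/

open MeasureTheory Real Set
open scoped ENNReal

theorem Function.Periodic.setLIntegral_Ioo_neg_eq_two_mul {F : ℝ → ℝ≥0∞} {T : ℝ}
    (hF : Function.Periodic F T) (hT : 0 < T) :
    ∫⁻ x in Ioo (-T) T, F x = 2 * ∫⁻ x in Ioo 0 T, F x := by
  have hshift : ∫⁻ x in Ioo (-T) 0, F x = ∫⁻ x in Ioo 0 T, F x := by
    have := (measurePreserving_add_right volume T).setLIntegral_comp_emb
      (measurableEmbedding_addRight T) F (Ioo (-T) 0)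
    simpa only [hF _, image_add_const_Ioo, neg_add_cancel, zero_add] using this
  have hdisj : Disjoint (Ioc (-T) 0) (Ioo 0 T) :=
    disjoint_left.mpr fun x hx hx' => hx.2.not_gt hx'.1
  rw [← Ioc_union_Ioo_eq_Ioo (neg_nonpos.mpr hT.le) hT, lintegral_union measurableSet_Ioo hdisj,
    setLIntegral_congr Ioo_ae_eq_Ioc.symm, hshift, two_mul]

namespace Real

theorem cos_div_sin_eq_tan_pi_div_two_sub (θ : ℝ) : cos θ / sin θ = tan (π / 2 - θ) := by
  rw [tan_eq_sin_div_cos, sin_pi_div_two_sub, cos_pi_div_two_sub]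

theorem cos_two_mul_eq_sin_sq_mul {θ : ℝ} (hθ : sin θ ≠ 0) :
    cos (2 * θ) = sin θ ^ 2 * ((cos θ / sin θ) ^ 2 - 1) := by
  rw [cos_two_mul', div_pow, mul_sub, mul_div_cancel₀ _ (pow_ne_zero 2 hθ), mul_one]

theorem hasDerivAt_cos_div_sin {θ : ℝ} (hθ : sin θ ≠ 0) :
    HasDerivAt (fun θ => cos θ / sin θ) (-(sin θ ^ 2)⁻¹) θ := by
  refine ((hasDerivAt_cos θ).div (hasDerivAt_sin θ) hθ).congr_deriv ?_
  field_simp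
  linear_combination -sin_sq_add_cos_sq θ

theorem bijOn_cos_div_sin_Ioo_zero_pi : BijOn (fun θ => cos θ / sin θ) (Ioo 0 π) univ := by
  have hreflect : BijOn (fun θ : ℝ => π / 2 - θ) (Ioo 0 π) (Ioo (-(π / 2)) (π / 2)) := by
    convert (sub_right_injective.injOn (s := Ioo 0 π)).bijOn_image using 1
    rw [image_const_sub_Ioo]
    congr 1 <;> ring
  simp only [cos_div_sin_eq_tan_pi_div_two_sub]
  have htan : BijOn tan (Ioo (-(π / 2)) (π / 2)) univ := ⟨mapsTo_univ _ _, injOn_tan, surjOn_tan⟩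
  exact htan.comp hreflect

theorem setLIntegral_Ioo_zero_pi_inv_sin_sq_mul_comp_cos_div_sin (g : ℝ → ℝ≥0∞) :
    ∫⁻ θ in Ioo 0 π, ENNReal.ofReal (sin θ ^ 2)⁻¹ * g (cos θ / sin θ) = ∫⁻ z, g z := by
  have hsin : ∀ θ ∈ Ioo 0 π, sin θ ≠ 0 := fun θ hθ => (sin_pos_of_pos_of_lt_pi hθ.1 hθ.2).ne'
  symm
  rw [← setLIntegral_univ, ← bijOn_cos_div_sin_Ioo_zero_pi.image_eq,
    lintegral_image_eq_lintegral_abs_deriv_mul measurableSet_Ioo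
      (fun θ hθ => (hasDerivAt_cos_div_sin (hsin θ hθ)).hasDerivWithinAt)
      bijOn_cos_div_sin_Ioo_zero_pi.injOn]
  simp only [abs_neg, abs_inv, abs_sq]

end Real

theorem ENNReal.div_ofReal_mul {a : ℝ} (ha : 0 < a) (x y : ℝ≥0∞) :
    x / (ENNReal.ofReal a * y) = ENNReal.ofReal a⁻¹ * (x / y) := by
  rw [div_eq_mul_inv, ENNReal.mul_inv (Or.inl (ENNReal.ofReal_pos.2 ha).ne')
    (Or.inl ENNReal.ofReal_ne_top), ENNReal.ofReal_inv_of_pos ha, div_eq_mul_inv, mul_left_comm]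

open MeasureTheory Real in
theorem stmt16_general (h : ℝ → ENNReal) :
    ∫⁻ θ in Set.Ioo (-π) π,
        h (Real.cos θ / Real.sin θ) / ENNReal.ofReal |Real.cos (2 * θ)| =
      2 * ∫⁻ z : ℝ, h z / ENNReal.ofReal |z ^ 2 - 1| := by
  have hperiodic : Function.Periodic
      (fun θ => h (cos θ / sin θ) / ENNReal.ofReal |cos (2 * θ)|) π := fun θ => by
    simp only [mul_add, cos_add_two_pi, cos_add_pi, sin_add_pi, neg_div_neg_eq]
  rw [hperiodic.setLIntegral_Ioo_neg_eq_two_mul pi_pos,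
    ← setLIntegral_Ioo_zero_pi_inv_sin_sq_mul_comp_cos_div_sin]
  refine congrArg _ (setLIntegral_congr_fun measurableSet_Ioo fun θ hθ => ?_)
  have hsin : 0 < sin θ := sin_pos_of_pos_of_lt_pi hθ.1 hθ.2
  rw [cos_two_mul_eq_sin_sq_mul hsin.ne', abs_mul, abs_sq, ENNReal.ofReal_mul (sq_nonneg _),
    ENNReal.div_ofReal_mul (pow_pos hsin 2)]

open MeasureTheory Real in
theorem stmt16 (h : ℝ → ENNReal) (hh : Measurable h) :
    ∫⁻ θ in Set.Ioo (-π) π,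
        h (Real.cos θ / Real.sin θ) / ENNReal.ofReal |Real.cos (2 * θ)| =
      2 * ∫⁻ z : ℝ, h z / ENNReal.ofReal |z ^ 2 - 1| :=
  stmt16_general h
end
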